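/- Let $0 < \tau_e < \tau_c < \tau_r < 1$, $c_a, c_b > 0$, $0 < b < a < 1$. Set $\phi_a = 1 + c_a/T^a$, $\phi_b = 1 - c_b/T^b$, $k_e = \lfloor \tau_e T \rfloor$, $k_c = \lfloor \tau_c T \rfloor$, $k_r = \lfloor \tau_r T \rfloor$. Then for every $\alpha_1 \in \mathbb{R}$ and $\alpha_3, \alpha_4 > 0$, one has $T^{\alpha_1} \phi_a^{\alpha_3(k_c - k_e)} \phi_b^{\alpha_4(k_r - k_c)} \to 0$ as $T \to \infty$. -/

import Mathlib

/-!
Take logarithms. Since `log (1 + y) ≤ y` and `k_c - k_e ≤ τ_c T`, the explosive factor contributes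
at most `α₃ τ_c c_a T^{1-a}` to the logarithm, while `log (1 - y) ≤ -y` and `k_r - k_c ≥ (τ_r - τ_c) T / 2`
(for large `T`) make the collapsing factor contribute at most `-α₄ (τ_r - τ_c) c_b T^{1-b} / 2`.
As `b < a` and `b < 1`, the negative power `T^{1-b}` beats both `T^{1-a}` and `α₁ log T`.
-/

open Filter Real

lemma tendsto_mul_log_add_mul_rpow_sub_mul_rpow_atBot {p q : ℝ} (hpq : p < q) (hq : 0 < q)
    (α C₁ : ℝ) {C₂ : ℝ} (hC₂ : 0 < C₂) :
    Tendsto (fun x : ℝ => α * log x + C₁ * x ^ p - C₂ * x ^ q) atTop atBot := by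
  have hlim : Tendsto (fun x : ℝ => α * (log x / x ^ q) + C₁ * x ^ (-(q - p)) - C₂)
      atTop (nhds (α * 0 + C₁ * 0 - C₂)) :=
    (((isLittleO_log_rpow_atTop hq).tendsto_div_nhds_zero.const_mul α).add
      ((tendsto_rpow_neg_atTop (sub_pos.2 hpq)).const_mul C₁)).sub_const C₂
  refine ((tendsto_rpow_atTop hq).atTop_mul_neg (by simpa using hC₂) hlim).congr' ?_
  filter_upwards [eventually_gt_atTop 0] with x hx
  have hxq : x ^ q ≠ 0 := (rpow_pos_of_pos hx q).ne'
  have hpow : x ^ q * x ^ (-(q - p)) = x ^ p := by rw [← rpow_add hx]; ring_nf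
  rw [← hpow]
  field_simp

lemma log_one_add_le_self {y : ℝ} (hy : -1 < y) : log (1 + y) ≤ y := by
  linarith [log_le_sub_one_of_pos (x := 1 + y) (by linarith)]

lemma mul_floor_sub_floor_mul_log_one_add_le {α s c x : ℝ} (t a : ℝ) (hα : 0 ≤ α) (hs : 0 ≤ s)
    (hc : 0 ≤ c) (hx : 0 < x) :
    α * ((⌊s * x⌋₊ : ℝ) - ⌊t * x⌋₊) * log (1 + c / x ^ a) ≤ α * s * c * x ^ (1 - a) := by
  have hy : 0 ≤ c / x ^ a := div_nonneg hc (rpow_nonneg hx.le a)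
  have hn : (⌊s * x⌋₊ : ℝ) - ⌊t * x⌋₊ ≤ s * x := by
    linarith [Nat.floor_le (mul_nonneg hs hx.le), Nat.cast_nonneg (α := ℝ) ⌊t * x⌋₊]
  have hL : log (1 + c / x ^ a) ≤ c / x ^ a := log_one_add_le_self (by linarith)
  calc α * ((⌊s * x⌋₊ : ℝ) - ⌊t * x⌋₊) * log (1 + c / x ^ a)
      ≤ α * (s * x) * (c / x ^ a) := by
        gcongr
        exact log_nonneg (by linarith)
    _ = α * s * c * x ^ (1 - a) := by rw [rpow_sub hx, rpow_one]; ring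

lemma eventually_mul_le_floor_sub_floor {s r : ℝ} (hs : 0 ≤ s) (hsr : s < r) :
    ∀ᶠ x in atTop, (r - s) / 2 * x ≤ (⌊r * x⌋₊ : ℝ) - ⌊s * x⌋₊ := by
  filter_upwards [eventually_ge_atTop 0, eventually_ge_atTop (2 / (r - s))] with x hx hx'
  have hgap : 2 ≤ x * (r - s) := (div_le_iff₀ (sub_pos.2 hsr)).1 hx'
  linarith [Nat.sub_one_lt_floor (r * x), Nat.floor_le (mul_nonneg hs hx)]

lemma eventually_mul_floor_sub_floor_mul_log_one_sub_le {α s r c b : ℝ} (hα : 0 ≤ α) (hs : 0 ≤ s)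
    (hsr : s < r) (hc : 0 ≤ c) (hb : 0 < b) :
    ∀ᶠ x in atTop, α * ((⌊r * x⌋₊ : ℝ) - ⌊s * x⌋₊) * log (1 - c / x ^ b)
      ≤ -(α * ((r - s) / 2) * c * x ^ (1 - b)) := by
  filter_upwards [eventually_mul_le_floor_sub_floor hs hsr, eventually_gt_atTop 0,
    (tendsto_rpow_atTop hb).eventually_gt_atTop c] with x hn hx hxb
  have hxb_pos : 0 < x ^ b := rpow_pos_of_pos hx b
  have hy : 0 ≤ c / x ^ b := div_nonneg hc hxb_pos.le
  have hL : log (1 - c / x ^ b) ≤ -(c / x ^ b) := by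
    rw [sub_eq_add_neg]
    exact log_one_add_le_self (by linarith [(div_lt_one hxb_pos).2 hxb])
  calc α * ((⌊r * x⌋₊ : ℝ) - ⌊s * x⌋₊) * log (1 - c / x ^ b)
      ≤ α * ((r - s) / 2 * x) * log (1 - c / x ^ b) :=
        mul_le_mul_of_nonpos_right (by gcongr) (by linarith)
    _ ≤ α * ((r - s) / 2 * x) * -(c / x ^ b) := by gcongr
    _ = -(α * ((r - s) / 2) * c * x ^ (1 - b)) := by rw [rpow_sub hx, rpow_one]; ring

lemma tendsto_log_bubble_collapse_atBot {τe τc τr ca cb a b : ℝ} (hτc : 0 ≤ τc) (hτcr : τc < τr)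
    (hca : 0 ≤ ca) (hcb : 0 < cb) (hb : 0 < b) (hba : b < a) (hb1 : b < 1)
    (α₁ : ℝ) {α₃ α₄ : ℝ} (hα₃ : 0 ≤ α₃) (hα₄ : 0 < α₄) :
    Tendsto (fun x : ℝ => α₁ * log x
      + α₃ * ((⌊τc * x⌋₊ : ℝ) - ⌊τe * x⌋₊) * log (1 + ca / x ^ a)
      + α₄ * ((⌊τr * x⌋₊ : ℝ) - ⌊τc * x⌋₊) * log (1 - cb / x ^ b)) atTop atBot := by
  have hC₂ : 0 < α₄ * ((τr - τc) / 2) * cb := by have := sub_pos.2 hτcr; positivity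
  refine tendsto_atBot_mono' _ ?_ (tendsto_mul_log_add_mul_rpow_sub_mul_rpow_atBot
    (p := 1 - a) (q := 1 - b) (by linarith) (by linarith) α₁ (α₃ * τc * ca) hC₂)
  filter_upwards [eventually_gt_atTop 0,
    eventually_mul_floor_sub_floor_mul_log_one_sub_le hα₄.le hτc hτcr hcb.le hb] with x hx hcollapse
  linarith [mul_floor_sub_floor_mul_log_one_add_le τe a hα₃ hτc hca hx]

theorem stmt_3_general (τe τc τr ca cb a b : ℝ)
    (hτ0 : 0 < τe) (hτ1 : τe < τc) (hτ2 : τc < τr)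
    (hca : 0 < ca) (hcb : 0 < cb) (hb : 0 < b) (hba : b < a) (ha1 : a < 1)
    (α₁ α₃ α₄ : ℝ) (hα₃ : 0 < α₃) (hα₄ : 0 < α₄) :
    Tendsto (fun T : ℕ =>
      (T : ℝ) ^ α₁ *
      (1 + ca / (T : ℝ) ^ a) ^ (α₃ * ((⌊τc * (T : ℝ)⌋₊ : ℝ) - (⌊τe * (T : ℝ)⌋₊ : ℝ))) *
      (1 - cb / (T : ℝ) ^ b) ^ (α₄ * ((⌊τr * (T : ℝ)⌋₊ : ℝ) - (⌊τc * (T : ℝ)⌋₊ : ℝ))))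
      atTop (nhds 0) := by
  have hT : Tendsto (fun T : ℕ => (T : ℝ)) atTop atTop := tendsto_natCast_atTop_atTop
  have hlog := tendsto_log_bubble_collapse_atBot (τe := τe) (hτ0.trans hτ1).le hτ2 hca.le hcb hb
    hba (hba.trans ha1) α₁ hα₃.le hα₄
  refine (tendsto_exp_atBot.comp (hlog.comp hT)).congr' ?_
  filter_upwards [hT.eventually (eventually_gt_atTop 0),
    hT.eventually ((tendsto_rpow_atTop hb).eventually_gt_atTop cb)] with T hT0 hTb
  have hbubble : 0 < 1 + ca / (T : ℝ) ^ a := by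
    have := div_pos hca (rpow_pos_of_pos hT0 a); linarith
  have hcollapse : 0 < 1 - cb / (T : ℝ) ^ b := by
    linarith [(div_lt_one (rpow_pos_of_pos hT0 b)).2 hTb]
  rw [Function.comp_apply, Function.comp_apply, rpow_def_of_pos hT0 α₁, rpow_def_of_pos hbubble,
    rpow_def_of_pos hcollapse, ← exp_add, ← exp_add]
  ring_nf

/-- With `0 < τ_e < τ_c < τ_r < 1`, `c_a, c_b > 0`, `0 < b < a < 1`,
`φ_a = 1 + c_a/T^a`, `φ_b = 1 - c_b/T^b`, and break dates `k_e = ⌊τ_e T⌋`,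
`k_c = ⌊τ_c T⌋`, `k_r = ⌊τ_r T⌋`: for every `α₁ ∈ ℝ` and `α₃, α₄ > 0`,
`T^{α₁} φ_a^{α₃ (k_c-k_e)} φ_b^{α₄ (k_r-k_c)} → 0`. -/
theorem stmt_3 (τe τc τr ca cb a b : ℝ)
    (hτ0 : 0 < τe) (hτ1 : τe < τc) (hτ2 : τc < τr) (hτ3 : τr < 1)
    (hca : 0 < ca) (hcb : 0 < cb) (hb : 0 < b) (hba : b < a) (ha1 : a < 1)
    (α₁ α₃ α₄ : ℝ) (hα₃ : 0 < α₃) (hα₄ : 0 < α₄) :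
    Tendsto (fun T : ℕ =>
      (T : ℝ) ^ α₁ *
      (1 + ca / (T : ℝ) ^ a) ^ (α₃ * ((⌊τc * (T : ℝ)⌋₊ : ℝ) - (⌊τe * (T : ℝ)⌋₊ : ℝ))) *
      (1 - cb / (T : ℝ) ^ b) ^ (α₄ * ((⌊τr * (T : ℝ)⌋₊ : ℝ) - (⌊τc * (T : ℝ)⌋₊ : ℝ))))
      atTop (nhds 0) :=
  stmt_3_general τe τc τr ca cb a b hτ0 hτ1 hτ2 hca hcb hb hba ha1 α₁ α₃ α₄ hα₃ hα₄
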